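/- arXiv:1507.07064 — 2 statements merged into one kernel-verified Lean document; each statement's English description precedes it below -/
import Mathlib

section
/- Serial dictatorship quota mechanisms are strategyproof under lexicographic preferences: no agent can obtain a bundle she strictly prefers (lexicographically) by reporting a different linear order over objects. -/
/-- `lexPrefR r X Y`: `X` lexicographically preferred to `Y` under rank `r`
(larger rank = more preferred). -/
def lexPrefR {O : Type*} [DecidableEq O] (r : O → ℕ) (X Y : Finset O) : Prop :=
  ∃ x ∈ X \ Y, ∀ y ∈ Y \ X, r y < r x

/-- The (at most) `k` objects of `S` with the largest rank under `r`. -/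
def topSet {O : Type*} [DecidableEq O] (r : O → ℕ) (S : Finset O) (k : ℕ) : Finset O :=
  S.filter fun x => (S.filter fun y => r x ≤ r y).card ≤ k

/-- Serial dictatorship with quotas: the list gives the sequence of
(dictator, quota) pairs; each dictator takes her top-quota remaining objects
under her rank function. Returns the bundle of agent `b`. -/
def sdRun {A O : Type*} [DecidableEq A] [DecidableEq O]
    (u : A → O → ℕ) : List (A × ℕ) → Finset O → A → Finset O
  | [], _, _ => ∅
  | (a, k) :: rest, S, b =>
    if b = a then topSet (u a) S k
    else sdRun u rest (S \ topSet (u a) S k) b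

/-- Remaining objects after running the serial dictatorship on the list. -/
def sdRem {A O : Type*} [DecidableEq A] [DecidableEq O]
    (u : A → O → ℕ) : List (A × ℕ) → Finset O → Finset O
  | [], S => S
  | (a, k) :: rest, S => sdRem u rest (S \ topSet (u a) S k)


lemma topSet_key {O : Type*} [DecidableEq O] (r : O → ℕ) (S : Finset O) (k : ℕ)
    {x y : O} (hx : x ∈ topSet r S k) (hyS : y ∈ S) (hy : y ∉ topSet r S k) :
    r y < r x := by
  simp only [topSet, Finset.mem_filter] at hx hy
  by_contra h
  push_neg at h
  apply hy ⟨hyS, ?_⟩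
  refine le_trans (Finset.card_le_card ?_) hx.2
  intro z hz
  simp only [Finset.mem_filter] at hz ⊢
  exact ⟨hz.1, le_trans h hz.2⟩

lemma topSet_card {O : Type*} [DecidableEq O] {r : O → ℕ} (hr : Function.Injective r)
    (S : Finset O) (k : ℕ) : (topSet r S k).card = min k S.card := by
  set T := topSet r S k with hT
  have hTS : T ⊆ S := Finset.filter_subset _ _
  have hle : T.card ≤ min k S.card := by
    refine le_min ?_ (Finset.card_le_card hTS)
    rcases T.eq_empty_or_nonempty with h | h
    · simp [h]
    · obtain ⟨x, hxT, hxmin⟩ := T.exists_min_image r h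
      have hxk : (S.filter fun z => r x ≤ r z).card ≤ k := by
        have := hxT; simp only [hT, topSet, Finset.mem_filter] at this
        exact this.2
      refine le_trans (Finset.card_le_card ?_) hxk
      intro z hz
      exact Finset.mem_filter.mpr ⟨hTS hz, hxmin z hz⟩
  refine le_antisymm hle ?_
  by_contra hlt
  push_neg at hlt
  have hST : (S \ T).Nonempty := by
    rw [Finset.sdiff_nonempty]
    intro hsub
    have h1 := Finset.card_le_card hsub
    have h2 : min k S.card ≤ S.card := min_le_right _ _
    omega
  obtain ⟨x, hxST, hxmax⟩ := (S \ T).exists_max_image r hST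
  have hxS : x ∈ S := (Finset.mem_sdiff.mp hxST).1
  have hxnT : x ∉ T := (Finset.mem_sdiff.mp hxST).2
  have hgt : k < (S.filter fun z => r x ≤ r z).card := by
    by_contra h
    push_neg at h
    exact hxnT (Finset.mem_filter.mpr ⟨hxS, h⟩)
  have hsub : (S.filter fun z => r x ≤ r z) ⊆ insert x T := by
    intro z hz
    obtain ⟨hzS, hzr⟩ := Finset.mem_filter.mp hz
    by_cases hzT : z ∈ T
    · exact Finset.mem_insert_of_mem hzT
    · have : r z ≤ r x := hxmax z (Finset.mem_sdiff.mpr ⟨hzS, hzT⟩)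
      have : r z = r x := le_antisymm this hzr
      exact Finset.mem_insert.mpr (Or.inl (hr this))
  have h3 : (S.filter fun z => r x ≤ r z).card ≤ T.card + 1 :=
    le_trans (Finset.card_le_card hsub) (Finset.card_insert_le _ _)
  have h4 : min k S.card ≤ k := min_le_left _ _
  omega

lemma topSet_lex {O : Type*} [DecidableEq O] {r v : O → ℕ}
    (hr : Function.Injective r) (hv : Function.Injective v)
    (S : Finset O) (k : ℕ) :
    topSet r S k = topSet v S k ∨ lexPrefR r (topSet r S k) (topSet v S k) := by
  set X := topSet r S k with hX
  set Y := topSet v S k with hY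
  by_cases hxy : X = Y
  · exact Or.inl hxy
  · right
    have hcard : X.card = Y.card := by
      rw [hX, hY, topSet_card hr, topSet_card hv]
    have hne : (X \ Y).Nonempty := by
      rw [Finset.sdiff_nonempty]
      intro hsub
      exact hxy (Finset.eq_of_subset_of_card_le hsub (le_of_eq hcard.symm))
    obtain ⟨x, hx⟩ := hne
    refine ⟨x, hx, fun y hy => ?_⟩
    obtain ⟨hyY, hynX⟩ := Finset.mem_sdiff.mp hy
    have hyS : y ∈ S := Finset.filter_subset _ _ hyY
    exact topSet_key r S k (Finset.mem_sdiff.mp hx).1 hyS hynX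

lemma sd_aux {A O : Type*} [DecidableEq A] [DecidableEq O]
    (u : A → O → ℕ) (hu : ∀ a, Function.Injective (u a))
    (a : A) (v : O → ℕ) (hv : Function.Injective v) :
    ∀ (L : List (A × ℕ)) (S : Finset O),
      sdRun u L S a = sdRun (Function.update u a v) L S a ∨
        lexPrefR (u a) (sdRun u L S a) (sdRun (Function.update u a v) L S a)
  | [], S => Or.inl rfl
  | (b, k) :: rest, S => by
    by_cases hab : a = b
    · subst hab
      simp only [sdRun, if_pos rfl, Function.update_self]
      exact topSet_lex (hu a) hv S k
    · simp only [sdRun, if_neg hab, Function.update_of_ne (Ne.symm hab)]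
      exact sd_aux u hu a v hv rest (S \ topSet (u b) S k)

/-- serial dictatorship quota mechanisms are strategyproof under
lexicographic preferences: no agent can obtain a lexicographically strictly
preferred bundle by reporting a different linear order over objects. -/
theorem serialDictatorship_strategyproof {A O : Type*}
    [DecidableEq A] [Fintype A] [DecidableEq O] [Fintype O]
    (u : A → O → ℕ) (hu : ∀ a, Function.Injective (u a))
    (L : List (A × ℕ)) (hnd : (L.map Prod.fst).Nodup)
    (a : A) (v : O → ℕ) (hv : Function.Injective v) :
    sdRun u L Finset.univ a = sdRun (Function.update u a v) L Finset.univ a ∨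
      lexPrefR (u a) (sdRun u L Finset.univ a)
        (sdRun (Function.update u a v) L Finset.univ a) := by
  exact sd_aux u hu a v hv L Finset.univ
end

section
/- In the standard assignment setting (each agent receives at most one object), the Random Serial Dictatorship mechanism is envyfree under downward lexicographic preferences: for every profile of strict linear orders over objects, no agent downward-lexicographically prefers another agent's probability vector over objects to her own. -/
/-- RSD probability that agent `i` receives object `x`: uniform average over all
orderings (permutations) of the `n` agents of the deterministic serial
dictatorship in which each agent in turn takes her single most preferred
remaining object (an agent facing no remaining object gets nothing). -/
noncomputable def rsdProb {O : Type*} [DecidableEq O] [Fintype O] {n : ℕ}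
    (u : Fin n → O → ℕ) (i : Fin n) (x : O) : ℚ :=
  (∑ σ : Equiv.Perm (Fin n),
      if x ∈ sdRun u (List.ofFn fun k => (σ k, 1)) Finset.univ i then (1 : ℚ) else 0)
    / (Fintype.card (Equiv.Perm (Fin n)))

/-- Downward-lexicographic preference over probability rows. -/
def dlexPref {O : Type*} (r : O → ℕ) (B C : O → ℚ) : Prop :=
  ∃ l : O, C l < B l ∧ ∀ k : O, r l < r k → B k = C k

section RSDproof
variable {O : Type*} [DecidableEq O] [Fintype O]

omit [Fintype O] in
lemma topSet_subset' (r : O → ℕ) (S : Finset O) (k : ℕ) : topSet r S k ⊆ S :=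
  Finset.filter_subset _ _

omit [Fintype O] in
lemma topSet_card_le_one' (r : O → ℕ) (S : Finset O) :
    (topSet r S 1).card ≤ 1 := by
  rw [Finset.card_le_one]
  intro a ha b hb
  simp only [topSet, Finset.mem_filter] at ha hb
  rcases le_total (r a) (r b) with h | h
  · exact Finset.card_le_one.mp ha.2 a (by simp [ha.1]) b (by simp [hb.1, h])
  · exact (Finset.card_le_one.mp hb.2 b (by simp [hb.1]) a (by simp [ha.1, h])).symm

omit [Fintype O] in
lemma exists_max_topSet' {r : O → ℕ} (hr : Function.Injective r) {S : Finset O}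
    (hS : S.Nonempty) : ∃ p ∈ topSet r S 1, ∀ y ∈ S, r y ≤ r p := by
  obtain ⟨p, hpS, hp⟩ := S.exists_max_image r hS
  refine ⟨p, ?_, hp⟩
  simp only [topSet, Finset.mem_filter]
  refine ⟨hpS, ?_⟩
  have hsub : (S.filter fun y => r p ≤ r y) ⊆ {p} := by
    intro y hy
    simp only [Finset.mem_filter] at hy
    simp [hr (le_antisymm (hp y hy.1) hy.2)]
  calc (S.filter fun y => r p ≤ r y).card ≤ ({p} : Finset O).card := Finset.card_le_card hsub
    _ = 1 := Finset.card_singleton p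

/-- Indicator function of a finset, as a rational vector. -/
def ind (A : Finset O) (x : O) : ℚ := if x ∈ A then 1 else 0

omit [Fintype O] in
lemma ind_nonneg (A : Finset O) (x : O) : 0 ≤ ind A x := by
  unfold ind; split <;> norm_num

/-- Lexicographically nonnegative vectors with respect to rank `r`
(higher rank = more preferred): whenever all strictly-higher-ranked
coordinates vanish, the coordinate is nonnegative. -/
def LexNN (r : O → ℕ) (d : O → ℚ) : Prop :=
  ∀ l, (∀ k, r l < r k → d k = 0) → 0 ≤ d l

omit [DecidableEq O] [Fintype O] in
lemma lexnn_congr {r : O → ℕ} {d₁ d₂ : O → ℚ} (h : ∀ x, d₁ x = d₂ x) (h1 : LexNN r d₁) :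
    LexNN r d₂ := by
  intro l hl
  rw [← h l]
  exact h1 l (fun k hk => by rw [h k]; exact hl k hk)

omit [DecidableEq O] in
/-- A sum of lexicographically nonnegative vectors is lexicographically nonnegative. -/
lemma lexnn_sum {ι : Type*} {r : O → ℕ} (s : Finset ι) (d : ι → O → ℚ)
    (h : ∀ i ∈ s, LexNN r (d i)) : LexNN r (fun x => ∑ i ∈ s, d i x) := by
  intro l hl
  have hall : ∀ i ∈ s, ∀ k, r l < r k → d i k = 0 := by
    by_contra hcon
    push_neg at hcon
    have hne : (Finset.univ.filter fun k => r l < r k ∧ ∃ i ∈ s, d i k ≠ 0).Nonempty := by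
      obtain ⟨i, hi, k, hk, hdk⟩ := hcon
      refine ⟨k, ?_⟩
      simp only [Finset.mem_filter, Finset.mem_univ, true_and]
      exact ⟨hk, i, hi, hdk⟩
    obtain ⟨k₀, hk₀, hmax⟩ := Finset.exists_max_image _ r hne
    simp only [Finset.mem_filter, Finset.mem_univ, true_and] at hk₀
    obtain ⟨hlk₀, i₀, hi₀, hd₀⟩ := hk₀
    have hup : ∀ i ∈ s, ∀ m, r k₀ < r m → d i m = 0 := by
      intro i hi m hm
      by_contra hdm
      have : m ∈ Finset.univ.filter fun k => r l < r k ∧ ∃ i ∈ s, d i k ≠ 0 := by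
        simp only [Finset.mem_filter, Finset.mem_univ, true_and]
        exact ⟨lt_trans hlk₀ hm, i, hi, hdm⟩
      exact absurd (hmax m this) (not_le.mpr hm)
    have hnn : ∀ i ∈ s, 0 ≤ d i k₀ := fun i hi => h i hi k₀ (hup i hi)
    have hzero : ∑ i ∈ s, d i k₀ = 0 := hl k₀ hlk₀
    exact hd₀ ((Finset.sum_eq_zero_iff_of_nonneg hnn).mp hzero i₀ hi₀)
  exact Finset.sum_nonneg (fun i hi => h i hi l (hall i hi))

omit [Fintype O] in
/-- The key combinatorial lemma: if `A` is agent `i`'s favorite (singleton) in `S`,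
`B'` is any sub-singleton of `S` distinct from `A`, `A' ⊆ S` and `B ⊆ S \ A`, then
`χ_A + χ_{A'} - χ_B - χ_{B'}` is lexicographically nonnegative for `i`. -/
lemma key_lemma {r : O → ℕ} (hr : Function.Injective r)
    (S A A' B B' : Finset O)
    (hA : A = topSet r S 1) (hB's : B' ⊆ S) (hB'c : B'.card ≤ 1) (hne : A ≠ B')
    (hA' : A' ⊆ S) (hB : B ⊆ S \ A) :
    LexNN r (fun x => ind A x + ind A' x - ind B x - ind B' x) := by
  intro l hup
  by_contra hneg
  push_neg at hneg
  have hlS : l ∈ S := by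
    by_cases hlB : l ∈ B
    · exact (Finset.mem_sdiff.mp (hB hlB)).1
    by_cases hlB' : l ∈ B'
    · exact hB's hlB'
    · exfalso
      have h1 : ind B l = 0 := by simp [ind, hlB]
      have h2 : ind B' l = 0 := by simp [ind, hlB']
      rw [h1, h2] at hneg
      linarith [ind_nonneg A l, ind_nonneg A' l]
  obtain ⟨p, hpA, hpmax⟩ := exists_max_topSet' hr ⟨l, hlS⟩
  rw [← hA] at hpA
  have hpB : p ∉ B := fun h => (Finset.mem_sdiff.mp (hB h)).2 hpA
  have hpB' : p ∉ B' := by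
    intro h
    apply hne
    apply Finset.eq_of_subset_of_card_le
    · intro a haA
      have : a = p := by
        have hcard := hA ▸ topSet_card_le_one' r S
        exact Finset.card_le_one.mp hcard a haA p hpA
      rwa [this]
    · calc B'.card ≤ 1 := hB'c
        _ ≤ A.card := Finset.one_le_card.mpr ⟨p, hpA⟩
  have hvp : 0 < ind A p + ind A' p - ind B p - ind B' p := by
    have h1 : ind A p = 1 := by simp [ind, hpA]
    have h2 : ind B p = 0 := by simp [ind, hpB]
    have h3 : ind B' p = 0 := by simp [ind, hpB']
    rw [h1, h2, h3]
    linarith [ind_nonneg A' p]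
  have hlp : l ≠ p := by
    intro h; rw [h] at hneg; linarith
  have hrlp : r l < r p :=
    lt_of_le_of_ne (hpmax l hlS) (fun h => hlp (hr h))
  have := hup p hrlp
  simp only [this] at hvp
  exact lt_irrefl 0 hvp

variable {n : ℕ}

/-- Single-unit serial dictatorship along an ordering list. -/
def alloc (u : Fin n → O → ℕ) (L : List (Fin n)) (S : Finset O) (b : Fin n) : Finset O :=
  sdRun u (L.map fun a => (a, 1)) S b

omit [Fintype O] in
lemma alloc_nil (u : Fin n → O → ℕ) (S : Finset O) (b : Fin n) : alloc u [] S b = ∅ := rfl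

omit [Fintype O] in
lemma alloc_cons (u : Fin n → O → ℕ) (a : Fin n) (L : List (Fin n)) (S : Finset O) (b : Fin n) :
    alloc u (a :: L) S b =
      if b = a then topSet (u a) S 1 else alloc u L (S \ topSet (u a) S 1) b := rfl

omit [Fintype O] in
lemma alloc_subset (u : Fin n → O → ℕ) (L : List (Fin n)) (S : Finset O) (b : Fin n) :
    alloc u L S b ⊆ S := by
  induction L generalizing S with
  | nil => simp [alloc_nil]
  | cons a rest ih =>
    rw [alloc_cons]
    split
    · exact topSet_subset' _ _ _
    · exact (ih _).trans (Finset.sdiff_subset)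

omit [Fintype O] in
/-- Comparing `j`'s bundle with `i`'s bundle when `i` takes over `j`'s position. -/
lemma lemX (u : Fin n → O → ℕ) (i j : Fin n) (hui : Function.Injective (u i)) :
    ∀ M : List (Fin n), i ∉ M → ∀ S : Finset O,
      LexNN (u i) (fun x =>
        ind (alloc u (M.map (Equiv.swap i j)) S i) x - ind (alloc u M S j) x) := by
  intro M
  induction M with
  | nil =>
    intro _ S l _
    simp [alloc_nil, ind]
  | cons b rest ih =>
    intro hiM S
    have hbi : b ≠ i := fun h => hiM (by simp [h])
    have hirest : i ∉ rest := fun h => hiM (by simp [h])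
    by_cases hbj : b = j
    · have hswap : Equiv.swap i j b = i := by rw [hbj]; exact Equiv.swap_apply_right i j
      have e1 : alloc u ((b :: rest).map (Equiv.swap i j)) S i = topSet (u i) S 1 := by
        rw [List.map_cons, hswap, alloc_cons, if_pos rfl]
      have e2 : alloc u (b :: rest) S j = topSet (u j) S 1 := by
        rw [alloc_cons, if_pos hbj.symm, hbj]
      by_cases hAB : topSet (u i) S 1 = topSet (u j) S 1
      · intro l _
        rw [e1, e2, hAB]
        simp
      · have := key_lemma hui S (topSet (u i) S 1) ∅ ∅ (topSet (u j) S 1) rfl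
          (topSet_subset' _ _ _) (topSet_card_le_one' _ _) hAB
          (Finset.empty_subset _) (by simp)
        refine lexnn_congr (fun x => ?_) this
        rw [e1, e2]
        simp [ind]
    · have hswap : Equiv.swap i j b = b := Equiv.swap_apply_of_ne_of_ne hbi hbj
      have e1 : alloc u ((b :: rest).map (Equiv.swap i j)) S i =
          alloc u (rest.map (Equiv.swap i j)) (S \ topSet (u b) S 1) i := by
        rw [List.map_cons, hswap, alloc_cons, if_neg (fun h => hbi h.symm)]
      have e2 : alloc u (b :: rest) S j =
          alloc u rest (S \ topSet (u b) S 1) j := by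
        rw [alloc_cons, if_neg (fun h => hbj h.symm)]
      refine lexnn_congr (fun x => ?_) (ih hirest (S \ topSet (u b) S 1))
      rw [e1, e2]


omit [Fintype O] in
lemma map_swap_swap (i j : Fin n) (M : List (Fin n)) :
    (M.map (Equiv.swap i j)).map (Equiv.swap i j) = M := by
  rw [List.map_map]
  have : (⇑(Equiv.swap i j) ∘ ⇑(Equiv.swap i j)) = id :=
    funext fun x => Equiv.swap_apply_self i j x
  rw [this, List.map_id]

omit [Fintype O] in
/-- The pairing lemma: the net indicator vector of the pair consisting of an
ordering `L` and the ordering with `i` and `j` swapped is lexicographically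
nonnegative for agent `i`. -/
lemma pair_lemma (u : Fin n → O → ℕ) (i j : Fin n) (hui : Function.Injective (u i))
    (hij : i ≠ j) :
    ∀ L : List (Fin n), L.Nodup → ∀ S : Finset O,
      LexNN (u i) (fun x =>
        ind (alloc u L S i) x + ind (alloc u (L.map (Equiv.swap i j)) S i) x
          - ind (alloc u L S j) x - ind (alloc u (L.map (Equiv.swap i j)) S j) x) := by
  intro L
  induction L with
  | nil =>
    intro _ S l _
    simp [alloc_nil, ind]
  | cons a rest ih =>
    intro hnd S
    have harest : a ∉ rest := (List.nodup_cons.mp hnd).1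
    have hrest : rest.Nodup := (List.nodup_cons.mp hnd).2
    by_cases hai : a = i
    · -- i is the first dictator
      have hsw : Equiv.swap i j a = j := by rw [hai]; exact Equiv.swap_apply_left i j
      have e1 : alloc u (a :: rest) S i = topSet (u i) S 1 := by
        rw [alloc_cons, if_pos hai.symm, hai]
      have e2 : alloc u (a :: rest) S j =
          alloc u rest (S \ topSet (u i) S 1) j := by
        rw [alloc_cons, if_neg (fun h => hij (hai ▸ h).symm), hai]
      have e3 : alloc u ((a :: rest).map (Equiv.swap i j)) S i =
          alloc u (rest.map (Equiv.swap i j)) (S \ topSet (u j) S 1) i := by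
        rw [List.map_cons, hsw, alloc_cons, if_neg (fun h => hij h)]
      have e4 : alloc u ((a :: rest).map (Equiv.swap i j)) S j = topSet (u j) S 1 := by
        rw [List.map_cons, hsw, alloc_cons, if_pos rfl]
      by_cases hAB : topSet (u i) S 1 = topSet (u j) S 1
      · have hX := lemX u i j hui rest ((hai ▸ harest : i ∉ rest)) (S \ topSet (u i) S 1)
        refine lexnn_congr (fun x => ?_) hX
        rw [e1, e2, e3, e4, ← hAB]
        ring
      · refine lexnn_congr (fun x => ?_) (key_lemma hui S (topSet (u i) S 1)
          (alloc u (rest.map (Equiv.swap i j)) (S \ topSet (u j) S 1) i)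
          (alloc u rest (S \ topSet (u i) S 1) j)
          (topSet (u j) S 1) rfl (topSet_subset' _ _ _) (topSet_card_le_one' _ _) hAB
          ((alloc_subset _ _ _ _).trans Finset.sdiff_subset)
          (alloc_subset _ _ _ _))
        rw [e1, e2, e3, e4]
    · by_cases haj : a = j
      · -- j is the first dictator
        have hsw : Equiv.swap i j a = i := by rw [haj]; exact Equiv.swap_apply_right i j
        have e1 : alloc u (a :: rest) S i =
            alloc u rest (S \ topSet (u j) S 1) i := by
          rw [alloc_cons, if_neg (fun h => hij (haj ▸ h)), haj]
        have e2 : alloc u (a :: rest) S j = topSet (u j) S 1 := by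
          rw [alloc_cons, if_pos haj.symm, haj]
        have e3 : alloc u ((a :: rest).map (Equiv.swap i j)) S i = topSet (u i) S 1 := by
          rw [List.map_cons, hsw, alloc_cons, if_pos rfl]
        have e4 : alloc u ((a :: rest).map (Equiv.swap i j)) S j =
            alloc u (rest.map (Equiv.swap i j)) (S \ topSet (u i) S 1) j := by
          rw [List.map_cons, hsw, alloc_cons, if_neg (fun h => hij h.symm)]
        have hinotin : i ∉ rest.map (Equiv.swap i j) := by
          intro hmem
          obtain ⟨b, hb, hb2⟩ := List.mem_map.mp hmem
          have : b = j := by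
            have := congrArg (Equiv.swap i j) hb2
            rwa [Equiv.swap_apply_self, Equiv.swap_apply_left] at this
          exact harest (haj ▸ this ▸ hb)
        by_cases hAB : topSet (u i) S 1 = topSet (u j) S 1
        · have hX := lemX u i j hui (rest.map (Equiv.swap i j)) hinotin
            (S \ topSet (u i) S 1)
          rw [map_swap_swap] at hX
          refine lexnn_congr (fun x => ?_) hX
          rw [e1, e2, e3, e4, ← hAB]
          ring
        · refine lexnn_congr (fun x => ?_) (key_lemma hui S (topSet (u i) S 1)
            (alloc u rest (S \ topSet (u j) S 1) i)
            (alloc u (rest.map (Equiv.swap i j)) (S \ topSet (u i) S 1) j)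
            (topSet (u j) S 1) rfl (topSet_subset' _ _ _) (topSet_card_le_one' _ _) hAB
            ((alloc_subset _ _ _ _).trans Finset.sdiff_subset)
            (alloc_subset _ _ _ _))
          rw [e1, e2, e3, e4]
          ring
      · -- a is neither i nor j
        have hsw : Equiv.swap i j a = a :=
          Equiv.swap_apply_of_ne_of_ne hai haj
        have e1 : alloc u (a :: rest) S i =
            alloc u rest (S \ topSet (u a) S 1) i := by
          rw [alloc_cons, if_neg (fun h => hai h.symm)]
        have e2 : alloc u (a :: rest) S j =
            alloc u rest (S \ topSet (u a) S 1) j := by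
          rw [alloc_cons, if_neg (fun h => haj h.symm)]
        have e3 : alloc u ((a :: rest).map (Equiv.swap i j)) S i =
            alloc u (rest.map (Equiv.swap i j)) (S \ topSet (u a) S 1) i := by
          rw [List.map_cons, hsw, alloc_cons, if_neg (fun h => hai h.symm)]
        have e4 : alloc u ((a :: rest).map (Equiv.swap i j)) S j =
            alloc u (rest.map (Equiv.swap i j)) (S \ topSet (u a) S 1) j := by
          rw [List.map_cons, hsw, alloc_cons, if_neg (fun h => haj h.symm)]
        refine lexnn_congr (fun x => ?_) (ih hrest (S \ topSet (u a) S 1))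
        rw [e1, e2, e3, e4]

end RSDproof

/-- in the standard assignment setting (each agent receives at
most one object), Random Serial Dictatorship is envyfree under downward
lexicographic preferences: for every profile of strict linear orders (injective
rank functions), no agent downward-lexicographically prefers another agent's
probability vector to her own. -/
theorem rsd_envyfree {O : Type*} [DecidableEq O] [Fintype O] {n : ℕ}
    (u : Fin n → O → ℕ) (hu : ∀ i, Function.Injective (u i)) :
    ∀ i j : Fin n, ¬ dlexPref (u i) (rsdProb u j) (rsdProb u i) := by
  intro i j hpref
  obtain ⟨l, hl, heq⟩ := hpref
  by_cases hij : i = j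
  · subst hij; exact lt_irrefl _ hl
  have hrsd : ∀ (b : Fin n) (x : O), rsdProb u b x =
      (∑ σ : Equiv.Perm (Fin n), ind (alloc u (List.ofFn σ) Finset.univ b) x)
        / (Fintype.card (Equiv.Perm (Fin n))) := by
    intro b x
    unfold rsdProb
    congr 1
    refine Finset.sum_congr rfl (fun σ _ => ?_)
    have h1 : (List.ofFn fun k => (σ k, (1:ℕ))) = (List.ofFn σ).map (fun a => (a, 1)) := by
      rw [List.map_ofFn]; rfl
    simp only [ind, alloc, h1]
    exact if_congr Iff.rfl rfl rfl
  have hre : ∀ (b : Fin n) (x : O),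
      (∑ σ : Equiv.Perm (Fin n),
          ind (alloc u ((List.ofFn σ).map (Equiv.swap i j)) Finset.univ b) x)
        = ∑ σ : Equiv.Perm (Fin n), ind (alloc u (List.ofFn σ) Finset.univ b) x := by
    intro b x
    apply Fintype.sum_bijective (fun σ => Equiv.swap i j * σ) (Group.mulLeft_bijective _)
    intro σ
    congr 2
    rw [show ⇑(Equiv.swap i j * σ) = ⇑(Equiv.swap i j) ∘ ⇑σ from rfl, ← List.map_ofFn]
  have hcpos : (0:ℚ) < (Fintype.card (Equiv.Perm (Fin n)) : ℚ) := by
    exact_mod_cast Fintype.card_pos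
  have hW : LexNN (u i) (fun x => ∑ σ : Equiv.Perm (Fin n),
      (ind (alloc u (List.ofFn σ) Finset.univ i) x
        + ind (alloc u ((List.ofFn σ).map (Equiv.swap i j)) Finset.univ i) x
        - ind (alloc u (List.ofFn σ) Finset.univ j) x
        - ind (alloc u ((List.ofFn σ).map (Equiv.swap i j)) Finset.univ j) x)) :=
    lexnn_sum Finset.univ _ (fun σ _ => pair_lemma u i j (hu i) hij (List.ofFn σ)
      (List.nodup_ofFn.mpr σ.injective) Finset.univ)
  have hWval : ∀ x : O, (∑ σ : Equiv.Perm (Fin n),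
      (ind (alloc u (List.ofFn σ) Finset.univ i) x
        + ind (alloc u ((List.ofFn σ).map (Equiv.swap i j)) Finset.univ i) x
        - ind (alloc u (List.ofFn σ) Finset.univ j) x
        - ind (alloc u ((List.ofFn σ).map (Equiv.swap i j)) Finset.univ j) x))
      = 2 * ((∑ σ : Equiv.Perm (Fin n), ind (alloc u (List.ofFn σ) Finset.univ i) x)
          - (∑ σ : Equiv.Perm (Fin n), ind (alloc u (List.ofFn σ) Finset.univ j) x)) := by
    intro x
    rw [Finset.sum_sub_distrib, Finset.sum_sub_distrib, Finset.sum_add_distrib,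
      hre i x, hre j x]
    ring
  have hfin : LexNN (u i) (fun x => rsdProb u i x - rsdProb u j x) := by
    intro l' hup
    have h2 : ∀ k, u i l' < u i k → (∑ σ : Equiv.Perm (Fin n),
        (ind (alloc u (List.ofFn σ) Finset.univ i) k
          + ind (alloc u ((List.ofFn σ).map (Equiv.swap i j)) Finset.univ i) k
          - ind (alloc u (List.ofFn σ) Finset.univ j) k
          - ind (alloc u ((List.ofFn σ).map (Equiv.swap i j)) Finset.univ j) k)) = 0 := by
      intro k hk
      have hd := hup k hk
      simp only at hd
      rw [hrsd i k, hrsd j k, div_sub_div_same] at hd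
      have hnum0 : (∑ σ : Equiv.Perm (Fin n), ind (alloc u (List.ofFn σ) Finset.univ i) k)
          - (∑ σ : Equiv.Perm (Fin n), ind (alloc u (List.ofFn σ) Finset.univ j) k) = 0 := by
        rcases div_eq_zero_iff.mp hd with h | h
        · exact h
        · exact absurd h (ne_of_gt hcpos)
      rw [hWval k, hnum0]
      ring
    have h3 := hW l' h2
    simp only at h3
    rw [hWval l'] at h3
    have h4 : 0 ≤ (∑ σ : Equiv.Perm (Fin n), ind (alloc u (List.ofFn σ) Finset.univ i) l')
        - (∑ σ : Equiv.Perm (Fin n), ind (alloc u (List.ofFn σ) Finset.univ j) l') := by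
      linarith
    simp only
    rw [hrsd i l', hrsd j l', div_sub_div_same]
    exact div_nonneg h4 hcpos.le
  have h5 := hfin l (fun k hk => by
    simp only
    rw [sub_eq_zero]
    exact (heq k hk).symm)
  simp only at h5
  linarith
end
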